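/- arXiv:1303.2303 — 7 statements merged into one kernel-verified Lean document; each statement's English description precedes it below -/
import Mathlib

section
/- Let L ⊆ ℤⁿ be a lattice. The following are equivalent: (1) L contains a nonzero pure element (i.e., a nonzero a ∈ L with a ≥ 0 or −a ≥ 0 componentwise, equivalently L ∩ ℕⁿ ≠ {0}); (2) every I_L-fiber is infinite; (3) some I_L-fiber is infinite. -/
open MvPolynomial

noncomputable section

/-- The integer vector associated to a natural exponent vector. -/
def natVec {ι : Type*} (u : ι →₀ ℕ) : ι → ℤ := fun i => (u i : ℤ)

/-- The lattice ideal `I_L` of a lattice `L ⊆ ℤ^ι` in `k[x_i : i ∈ ι]`. -/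
def latticeIdeal (k : Type*) [Field k] {ι : Type*} (L : Submodule ℤ (ι → ℤ)) :
    Ideal (MvPolynomial ι k) :=
  Ideal.span {f | ∃ u v : ι →₀ ℕ, natVec u - natVec v ∈ L ∧
    f = monomial u (1 : k) - monomial v 1}

/-- `f` is a binomial `x^u - x^v` belonging to the lattice ideal `I_L`. -/
def IsLatticeBinomial (k : Type*) [Field k] {ι : Type*} (L : Submodule ℤ (ι → ℤ))
    (f : MvPolynomial ι k) : Prop :=
  ∃ u v : ι →₀ ℕ, natVec u - natVec v ∈ L ∧ f = monomial u (1 : k) - monomial v 1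

/-- The `I_L`-fiber of `u` : all exponent vectors `v` with `v - u ∈ L`. -/
def fiber {ι : Type*} (L : Submodule ℤ (ι → ℤ)) (u : ι →₀ ℕ) : Set (ι →₀ ℕ) :=
  {v | natVec v - natVec u ∈ L}

/-- `L⁺ = L ∩ ℕ^ι`. -/
def Lplus {ι : Type*} (L : Submodule ℤ (ι → ℤ)) : Set (ι → ℤ) :=
  {w | w ∈ L ∧ ∀ i, 0 ≤ w i}

/-- `L_pure`, the subgroup of `L` generated by `L⁺`. -/
def Lpure {ι : Type*} (L : Submodule ℤ (ι → ℤ)) : Submodule ℤ (ι → ℤ) :=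
  Submodule.span ℤ (Lplus L)

/-- `σ_L`, the union of the supports of elements of `L⁺`. -/
def sigmaL {ι : Type*} (L : Submodule ℤ (ι → ℤ)) : Set ι :=
  {i | ∃ w ∈ Lplus L, w i ≠ 0}

/-- `F̄ ≤_I Ḡ` : some translate of `F` is contained in `G`. -/
def fiberLE {ι : Type*} (F G : Set (ι →₀ ℕ)) : Prop :=
  ∃ t : ι →₀ ℕ, (fun v => t + v) '' F ⊆ G

/-- `F ≡_I G` : equivalence of fibers. -/
def fiberEquiv {ι : Type*} (F G : Set (ι →₀ ℕ)) : Prop :=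
  fiberLE F G ∧ fiberLE G F

/-- `F̄ <_I Ḡ`. -/
def fiberLT {ι : Type*} (F G : Set (ι →₀ ℕ)) : Prop :=
  fiberLE F G ∧ ¬ fiberEquiv F G

/-- The ideal `I_{<F̄}` generated by binomials of `I_L` whose fiber class is `<_I F̄`. -/
def idealLT (k : Type*) [Field k] {ι : Type*} (L : Submodule ℤ (ι → ℤ))
    (F : Set (ι →₀ ℕ)) : Ideal (MvPolynomial ι k) :=
  Ideal.span {f | ∃ u v : ι →₀ ℕ, natVec u - natVec v ∈ L ∧
    f = monomial u (1 : k) - monomial v 1 ∧ fiberLT (fiber L u) F}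

/-- The ideal `I_{≤F̄}` generated by binomials of `I_L` whose fiber class is `≤_I F̄`. -/
def idealLE (k : Type*) [Field k] {ι : Type*} (L : Submodule ℤ (ι → ℤ))
    (F : Set (ι →₀ ℕ)) : Ideal (MvPolynomial ι k) :=
  Ideal.span {f | ∃ u v : ι →₀ ℕ, natVec u - natVec v ∈ L ∧
    f = monomial u (1 : k) - monomial v 1 ∧ fiberLE (fiber L u) F}

/-- `μ(I_L)` : the least cardinality of a binomial generating set of `I_L`. -/
def muIdeal (k : Type*) [Field k] {ι : Type*} (L : Submodule ℤ (ι → ℤ)) : ℕ :=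
  sInf {m | ∃ S : Finset (MvPolynomial ι k), S.card = m ∧
    (∀ f ∈ S, IsLatticeBinomial k L f) ∧
    Ideal.span (S : Set (MvPolynomial ι k)) = latticeIdeal k L}

/-- A Markov basis of `I_L` : a binomial generating set of least cardinality `μ(I_L)`. -/
def IsMarkovBasis (k : Type*) [Field k] {ι : Type*} (L : Submodule ℤ (ι → ℤ))
    (S : Finset (MvPolynomial ι k)) : Prop :=
  (∀ f ∈ S, IsLatticeBinomial k L f) ∧
  Ideal.span (S : Set (MvPolynomial ι k)) = latticeIdeal k L ∧
  S.card = muIdeal k L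

/-- `u` is an `L`-primitive vector : `u ≠ 0`, `u ∈ L`, and whenever `q • u ∈ L` for
a rational `q`, then `q` is an integer. -/
def IsLPrimitive {ι : Type*} (L : Submodule ℤ (ι → ℤ)) (u : ι → ℤ) : Prop :=
  u ≠ 0 ∧ u ∈ L ∧ ∀ (q : ℚ) (w : ι → ℤ), w ∈ L →
    (∀ i, (w i : ℚ) = q * (u i : ℚ)) → ∃ m : ℤ, q = (m : ℚ)

/-- Projection onto the coordinates in `σ_L`. -/
def projSigma {n : ℕ} (L : Submodule ℤ (Fin n → ℤ)) :
    (Fin n → ℤ) →ₗ[ℤ] ({i : Fin n // i ∈ sigmaL L} → ℤ) :=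
  LinearMap.pi fun j => LinearMap.proj j.1

/-- Projection onto the coordinates outside `σ_L` (giving `u ↦ u^σ`). -/
def projCompl {n : ℕ} (L : Submodule ℤ (Fin n → ℤ)) :
    (Fin n → ℤ) →ₗ[ℤ] ({i : Fin n // i ∉ sigmaL L} → ℤ) :=
  LinearMap.pi fun j => LinearMap.proj j.1

/-- An indispensable binomial: it appears, up to a constant multiple, in every Markov basis. -/
def IsIndispensableBinomial (k : Type*) [Field k] {ι : Type*} (L : Submodule ℤ (ι → ℤ))
    (f : MvPolynomial ι k) : Prop :=
  ∀ S : Finset (MvPolynomial ι k), IsMarkovBasis k L S → ∃ c : k, c ≠ 0 ∧ c • f ∈ S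

/-- An indispensable monomial: every Markov basis contains a binomial having it as a term. -/
def IsIndispensableMonomial (k : Type*) [Field k] {ι : Type*} (L : Submodule ℤ (ι → ℤ))
    (u : ι →₀ ℕ) : Prop :=
  ∀ S : Finset (MvPolynomial ι k), IsMarkovBasis k L S → ∃ f ∈ S, ∃ v : ι →₀ ℕ,
    f = monomial u (1 : k) - monomial v 1 ∨ f = monomial v (1 : k) - monomial u 1

/-!
A nonzero `a ∈ L ∩ ℕⁿ` makes every fiber infinite, since `u + m a` lies in the fiber of `u`
for all `m ∈ ℕ`. Conversely, by Dickson's lemma an infinite fiber contains two exponent vectors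
`v < w`, and `w - v` is then a nonzero element of `L ∩ ℕⁿ`.
-/

theorem Set.Infinite.exists_lt_of_wellQuasiOrderedLE {α : Type*} [PartialOrder α]
    [WellQuasiOrderedLE α] {s : Set α} (hs : s.Infinite) : ∃ x ∈ s, ∃ y ∈ s, x < y := by
  let f := hs.natEmbedding
  obtain ⟨m, n, hmn, hle⟩ := wellQuasiOrdered_le fun k => (f k : α)
  have hne : (f m : α) ≠ f n := fun h => hmn.ne (f.injective (Subtype.ext h))
  exact ⟨f m, (f m).2, f n, (f n).2, hle.lt_of_ne hne⟩

section LatticeFiber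

variable {ι : Type*} {L : Submodule ℤ (ι → ℤ)}

theorem natVec_add (u v : ι →₀ ℕ) : natVec (u + v) = natVec u + natVec v := by
  ext i; simp [natVec]

theorem natVec_nsmul (m : ℕ) (u : ι →₀ ℕ) : natVec (m • u) = m • natVec u := by
  ext i; simp [natVec]

theorem natVec_injective : Function.Injective (natVec (ι := ι)) := fun _ _ h =>
  Finsupp.ext fun i => Int.ofNat_inj.1 (congrFun h i)

theorem natVec_mono {u v : ι →₀ ℕ} (h : u ≤ v) : natVec u ≤ natVec v := fun i =>
  Int.ofNat_le.2 (h i)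

theorem exists_natVec_eq [Finite ι] {a : ι → ℤ} (ha : 0 ≤ a) : ∃ b, natVec b = a :=
  ⟨Finsupp.equivFunOnFinite.symm fun i => (a i).toNat, funext fun i => Int.toNat_of_nonneg (ha i)⟩

theorem sub_mem_of_mem_fiber {u v w : ι →₀ ℕ} (hv : v ∈ fiber L u) (hw : w ∈ fiber L u) :
    natVec w - natVec v ∈ L := by
  simpa using L.sub_mem hw hv

theorem add_nsmul_mem_fiber {b : ι →₀ ℕ} (hb : natVec b ∈ L) (u : ι →₀ ℕ) (m : ℕ) :
    u + m • b ∈ fiber L u := by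
  simpa [fiber, natVec_add, natVec_nsmul] using L.smul_of_tower_mem m hb

theorem fiber_infinite_of_mem_Lplus [Finite ι] {a : ι → ℤ} (ha : a ∈ Lplus L) (ha0 : a ≠ 0)
    (u : ι →₀ ℕ) : (fiber L u).Infinite := by
  obtain ⟨b, rfl⟩ := exists_natVec_eq ha.2
  have hb0 : natVec b ≠ 0 := ha0
  refine Set.infinite_of_injective_forall_mem (f := fun m : ℕ => u + m • b) ?_
    (add_nsmul_mem_fiber ha.1 u)
  intro m m' h
  have := congrArg natVec (add_left_cancel h)
  simp only [natVec_nsmul] at this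
  exact_mod_cast smul_left_injective ℤ hb0 this

theorem exists_ne_zero_mem_Lplus_of_fiber_infinite [Finite ι] {u : ι →₀ ℕ}
    (h : (fiber L u).Infinite) : ∃ a ∈ Lplus L, a ≠ 0 := by
  obtain ⟨v, hv, w, hw, hvw⟩ := h.exists_lt_of_wellQuasiOrderedLE
  refine ⟨natVec w - natVec v, ⟨sub_mem_of_mem_fiber hv hw, ?_⟩, ?_⟩
  · exact fun i => sub_nonneg.2 (natVec_mono hvw.le i)
  · exact sub_ne_zero.2 (natVec_injective.ne hvw.ne')

theorem exists_ne_zero_mem_Lplus_of_pure {a : ι → ℤ} (haL : a ∈ L) (ha0 : a ≠ 0)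
    (ha : (∀ i, 0 ≤ a i) ∨ (∀ i, a i ≤ 0)) : ∃ b ∈ Lplus L, b ≠ 0 := by
  rcases ha with ha | ha
  · exact ⟨a, ⟨haL, ha⟩, ha0⟩
  · exact ⟨-a, ⟨L.neg_mem haL, fun i => neg_nonneg.2 (ha i)⟩, neg_ne_zero.2 ha0⟩

end LatticeFiber

/-- `L` contains a nonzero pure element iff every `I_L`-fiber is infinite,
iff some `I_L`-fiber is infinite. -/
theorem stmt1 {n : ℕ} (L : Submodule ℤ (Fin n → ℤ)) :
    ((∃ a ∈ L, a ≠ 0 ∧ ((∀ i, 0 ≤ a i) ∨ (∀ i, a i ≤ 0))) ↔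
      ∀ u : Fin n →₀ ℕ, (fiber L u).Infinite) ∧
    ((∀ u : Fin n →₀ ℕ, (fiber L u).Infinite) ↔ ∃ u : Fin n →₀ ℕ, (fiber L u).Infinite) := by
  have pure_imp_all : (∃ a ∈ L, a ≠ 0 ∧ ((∀ i, 0 ≤ a i) ∨ (∀ i, a i ≤ 0))) →
      ∀ u : Fin n →₀ ℕ, (fiber L u).Infinite := by
    rintro ⟨a, haL, ha0, ha⟩ u
    obtain ⟨b, hb, hb0⟩ := exists_ne_zero_mem_Lplus_of_pure haL ha0 ha
    exact fiber_infinite_of_mem_Lplus hb hb0 u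
  have some_imp_pure : (∃ u : Fin n →₀ ℕ, (fiber L u).Infinite) →
      ∃ a ∈ L, a ≠ 0 ∧ ((∀ i, 0 ≤ a i) ∨ (∀ i, a i ≤ 0)) := by
    rintro ⟨u, hu⟩
    obtain ⟨a, ⟨haL, ha⟩, ha0⟩ := exists_ne_zero_mem_Lplus_of_fiber_infinite hu
    exact ⟨a, haL, ha0, .inl ha⟩
  exact ⟨⟨pure_imp_all, fun h => some_imp_pure ⟨0, h 0⟩⟩,
    ⟨fun h => ⟨0, h 0⟩, fun h => pure_imp_all (some_imp_pure h)⟩⟩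
end
end

section
/- Let L ⊆ ℤⁿ be a lattice. There exists an element w ∈ L⁺ with supp(w) = σ_L. Moreover, for u ∈ L one has supp(u) ⊆ σ_L if and only if u ∈ L_pure; equivalently, u ∈ L_pure if and only if u_i = 0 for all i ∉ σ_L. -/
open MvPolynomial

noncomputable section

/-- there exists `w ∈ L⁺` with `supp(w) = σ_L`; moreover for `u ∈ L`,
`supp(u) ⊆ σ_L ↔ u ∈ L_pure`, equivalently `u ∈ L_pure ↔ u_i = 0 for all i ∉ σ_L`. -/
theorem stmt3 {n : ℕ} (L : Submodule ℤ (Fin n → ℤ)) :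
    (∃ w ∈ Lplus L, {i | w i ≠ 0} = sigmaL L) ∧
    (∀ u ∈ L, ({i | u i ≠ 0} ⊆ sigmaL L ↔ u ∈ Lpure L)) ∧
    (∀ u ∈ L, (u ∈ Lpure L ↔ ∀ i, i ∉ sigmaL L → u i = 0)) := by
  classical
  -- Lemma A: elements of L⁺ vanish off σ_L
  have hA : ∀ v ∈ Lplus L, ∀ j, j ∉ sigmaL L → v j = 0 := by
    intro v hv j hj
    by_contra h
    exact hj ⟨v, hv, h⟩
  -- Lemma C: elements of L_pure vanish off σ_L
  have hC : ∀ u ∈ Lpure L, ∀ j, j ∉ sigmaL L → u j = 0 := by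
    intro u hu
    refine Submodule.span_induction (p := fun u _ => ∀ j ∉ sigmaL L, u j = 0)
      ?_ ?_ ?_ ?_ hu
    · exact hA
    · intro j _; rfl
    · intro x y _ _ hx hy j hj
      simp [Pi.add_apply, hx j hj, hy j hj]
    · intro a x _ hx j hj
      simp [Pi.smul_apply, hx j hj]
  -- witness per coordinate
  have hg : ∀ i : Fin n, ∃ g : Fin n → ℤ,
      g ∈ Lplus L ∧ (i ∈ sigmaL L → g i ≠ 0) := by
    intro i
    by_cases h : i ∈ sigmaL L
    · obtain ⟨w, hw, hwi⟩ := h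
      exact ⟨w, hw, fun _ => hwi⟩
    · exact ⟨0, ⟨Submodule.zero_mem L, fun _ => le_refl 0⟩, fun hi => absurd hi h⟩
  choose g hgL hgi using hg
  set w : Fin n → ℤ := ∑ i : Fin n, g i with hw
  have hwL : w ∈ Lplus L := by
    constructor
    · exact Submodule.sum_mem L fun i _ => (hgL i).1
    · intro j
      rw [hw]
      simp only [Finset.sum_apply]
      exact Finset.sum_nonneg fun i _ => (hgL i).2 j
  have hwsupp : {i | w i ≠ 0} = sigmaL L := by
    ext j
    simp only [Set.mem_setOf_eq]
    constructor
    · intro h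
      by_contra hj
      exact h (hA w hwL j hj)
    · intro hj
      have h1 : (1 : ℤ) ≤ g j j := by
        have := (hgL j).2 j
        have := hgi j hj
        omega
      have hle : g j j ≤ w j := by
        rw [hw]
        simp only [Finset.sum_apply]
        exact Finset.single_le_sum (fun i _ => (hgL i).2 j) (Finset.mem_univ j)
      omega
  refine ⟨⟨w, hwL, hwsupp⟩, ?_, ?_⟩
  · -- second statement
    intro u hu
    constructor
    · intro hsupp
      -- choose N large
      set N : ℤ := ∑ j : Fin n, |u j| with hN
      have hN0 : 0 ≤ N := Finset.sum_nonneg fun j _ => abs_nonneg _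
      have hNge : ∀ j, |u j| ≤ N := fun j =>
        Finset.single_le_sum (fun i _ => abs_nonneg (u i)) (Finset.mem_univ j)
      have hplus : u + N • w ∈ Lplus L := by
        constructor
        · exact Submodule.add_mem L hu (Submodule.smul_mem L N hwL.1)
        · intro j
          by_cases hj : j ∈ sigmaL L
          · have hw1 : (1 : ℤ) ≤ w j := by
              have h0 := hwL.2 j
              have : w j ≠ 0 := by rw [← hwsupp] at hj; exact hj
              omega
            have : N * 1 ≤ N * w j := mul_le_mul_of_nonneg_left hw1 hN0
            have habs := hNge j
            have := abs_le.mp habs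
            simp only [Pi.add_apply, Pi.smul_apply, smul_eq_mul]
            omega
          · have hu0 : u j = 0 := by
              by_contra h
              exact hj (hsupp h)
            have hw0 : w j = 0 := hA w hwL j hj
            simp [hu0, hw0]
      have h1 : u + N • w ∈ Lpure L := Submodule.subset_span hplus
      have h2 : N • w ∈ Lpure L :=
        Submodule.smul_mem _ N (Submodule.subset_span hwL)
      have : (u + N • w) - N • w ∈ Lpure L := Submodule.sub_mem _ h1 h2
      simpa using this
    · intro hp
      intro j hj
      by_contra hjs
      exact hj (hC u hp j hjs)
  · -- third statement
    intro u hu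
    constructor
    · exact fun hp => hC u hp
    · intro h0
      have hsupp : {i | u i ≠ 0} ⊆ sigmaL L := by
        intro j hj
        by_contra hjs
        exact hj (h0 j hjs)
      -- reuse part two's forward direction: redo the argument
      set N : ℤ := ∑ j : Fin n, |u j| with hN
      have hN0 : 0 ≤ N := Finset.sum_nonneg fun j _ => abs_nonneg _
      have hNge : ∀ j, |u j| ≤ N := fun j =>
        Finset.single_le_sum (fun i _ => abs_nonneg (u i)) (Finset.mem_univ j)
      have hplus : u + N • w ∈ Lplus L := by
        constructor
        · exact Submodule.add_mem L hu (Submodule.smul_mem L N hwL.1)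
        · intro j
          by_cases hj : j ∈ sigmaL L
          · have hw1 : (1 : ℤ) ≤ w j := by
              have h0' := hwL.2 j
              have : w j ≠ 0 := by rw [← hwsupp] at hj; exact hj
              omega
            have : N * 1 ≤ N * w j := mul_le_mul_of_nonneg_left hw1 hN0
            have habs := hNge j
            have := abs_le.mp habs
            simp only [Pi.add_apply, Pi.smul_apply, smul_eq_mul]
            omega
          · have hw0 : w j = 0 := hA w hwL j hj
            simp [h0 j hj, hw0]
      have h1 : u + N • w ∈ Lpure L := Submodule.subset_span hplus
      have h2 : N • w ∈ Lpure L :=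
        Submodule.smul_mem _ N (Submodule.subset_span hwL)
      have : (u + N • w) - N • w ∈ Lpure L := Submodule.sub_mem _ h1 h2
      simpa using this
end
end

section
/- Let L ⊆ ℤⁿ be a lattice. There exists a ℤ-basis of L_pure all of whose elements lie in L⁺ and have support equal to σ_L. -/
open MvPolynomial

noncomputable section

/-!
Summing, over `j ∈ σ_L`, an element of `L⁺` that is nonzero at `j` gives `W ∈ L⁺` strictly
positive on `σ_L`, while every element of `L_pure` vanishes off `σ_L`. By the Smith normal form
of `ℤ ∙ W` inside the free module `L_pure`, some basis vector `p` of `L_pure` is a positive rational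
multiple of `W`, hence strictly positive on `σ_L` as well. A transvection `x ↦ x + f x • p` with
`f p = 0` and `f` large on the other basis vectors `bᵢ` then produces the basis `p, bᵢ + Nᵢ • p`,
all of whose members are strictly positive on `σ_L`.
-/

universe u

theorem exists_basis_sameRay {M : Type u} [AddCommGroup M] [Module.Free ℤ M] [Module.Finite ℤ M]
    {w : M} (hw : w ≠ 0) : ∃ (ι : Type u) (b : Module.Basis ι ℤ M) (i : ι), SameRay ℤ w (b i) := by
  obtain ⟨n, snf⟩ := (ℤ ∙ w).smithNormalForm (Module.Free.chooseBasis ℤ M)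
  have : Nontrivial (ℤ ∙ w) := Submodule.nontrivial_span_singleton hw
  obtain ⟨i⟩ : Nonempty (Fin n) := snf.bN.index_nonempty
  obtain ⟨c, hc⟩ := Submodule.mem_span_singleton.mp (snf.bN i).2
  have hc0 : c ≠ 0 := by
    rintro rfl
    exact snf.bN.ne_zero i (Subtype.ext (by simpa using hc.symm))
  have ha0 : snf.a i ≠ 0 := by
    intro ha
    exact snf.bN.ne_zero i (Subtype.ext (by simp [snf.snf, ha]))
  have hca : (c * c) • w = (c * snf.a i) • snf.bM (snf.f i) := by
    rw [mul_smul, hc, snf.snf, mul_smul]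
  rcases (mul_ne_zero hc0 ha0).lt_or_gt with hneg | hpos
  · refine ⟨_, snf.bM.map (LinearEquiv.neg ℤ), snf.f i, .inr <| .inr
      ⟨c * c, -(c * snf.a i), mul_self_pos.mpr hc0, neg_pos.mpr hneg, ?_⟩⟩
    simp [hca]
  · exact ⟨_, snf.bM, snf.f i, .inr <| .inr ⟨c * c, c * snf.a i, mul_self_pos.mpr hc0, hpos, hca⟩⟩

theorem Module.Basis.exists_basis_add_smul {R M ι : Type*} [CommRing R] [AddCommGroup M]
    [Module R M] (b : Module.Basis ι R M) (i₀ : ι) (c : ι → R) :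
    ∃ b' : Module.Basis ι R M, b' i₀ = b i₀ ∧ ∀ i ≠ i₀, b' i = b i + c i • b i₀ := by
  classical
  let f : Module.Dual R M := b.constr R (Function.update c i₀ 0)
  have hf : f (b i₀) = 0 := by simp [f]
  refine ⟨b.map (LinearEquiv.transvection hf), ?_, fun i hi => ?_⟩
  · rw [Module.Basis.map_apply, LinearEquiv.transvection.apply, hf, zero_smul, add_zero]
  · rw [Module.Basis.map_apply, LinearEquiv.transvection.apply]
    simp [f, hi]

theorem exists_add_smul_pos {ι : Type*} [Fintype ι] {s : Set ι} {p : ι → ℤ}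
    (hp : ∀ j ∈ s, 0 < p j) (x : ι → ℤ) : ∃ N : ℤ, ∀ j ∈ s, 0 < (x + N • p) j := by
  refine ⟨∑ k, |x k| + 1, fun j hj => ?_⟩
  have hxj : |x j| ≤ ∑ k, |x k| :=
    Finset.single_le_sum (f := fun k => |x k|) (fun k _ => abs_nonneg _) (Finset.mem_univ j)
  have hN : ∑ k, |x k| + 1 ≤ (∑ k, |x k| + 1) * p j :=
    le_mul_of_one_le_right (by positivity) (hp j hj)
  simp only [Pi.add_apply, Pi.smul_apply, smul_eq_mul]
  linarith [neg_abs_le (x j)]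

section Lattice

variable {κ : Type u} (L : Submodule ℤ (κ → ℤ))

theorem Lpure_le : Lpure L ≤ L :=
  Submodule.span_le.mpr fun _ hw => hw.1

theorem apply_eq_zero_of_mem_Lpure {v : κ → ℤ} (hv : v ∈ Lpure L) {j : κ} (hj : j ∉ sigmaL L) :
    v j = 0 := by
  induction hv using Submodule.span_induction with
  | mem w hw => exact not_not.mp fun h => hj ⟨w, hw, h⟩
  | zero => rfl
  | add x y _ _ hx hy => simp [hx, hy]
  | smul a x _ hx => simp [hx]

theorem exists_mem_Lplus_pos_on_sigmaL [Fintype κ] :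
    ∃ W ∈ Lplus L, ∀ j ∈ sigmaL L, 0 < W j := by
  classical
  have hwit : ∀ j, ∃ w ∈ Lplus L, j ∈ sigmaL L → 0 < w j := fun j => by
    by_cases hj : j ∈ sigmaL L
    · obtain ⟨w, hw, hwj⟩ := hj
      exact ⟨w, hw, fun _ => (hw.2 j).lt_of_ne' hwj⟩
    · exact ⟨0, ⟨L.zero_mem, fun _ => le_rfl⟩, fun h => absurd h hj⟩
  choose w hwL hwpos using hwit
  refine ⟨∑ k, w k, ⟨L.sum_mem fun k _ => (hwL k).1, fun i => ?_⟩, fun j hj => ?_⟩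
  · rw [Finset.sum_apply]
    exact Finset.sum_nonneg fun k _ => (hwL k).2 i
  · rw [Finset.sum_apply]
    exact (hwpos j hj).trans_le <|
      Finset.single_le_sum (f := fun k => w k j) (fun k _ => (hwL k).2 j) (Finset.mem_univ j)

theorem mem_Lplus_and_support_eq_sigmaL {v : κ → ℤ} (hv : v ∈ Lpure L)
    (hpos : ∀ j ∈ sigmaL L, 0 < v j) : v ∈ Lplus L ∧ {j | v j ≠ 0} = sigmaL L := by
  have hsupp : ∀ j, v j ≠ 0 ↔ j ∈ sigmaL L := fun j =>
    ⟨fun h => not_not.mp fun hj => h (apply_eq_zero_of_mem_Lpure L hv hj),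
      fun hj => (hpos j hj).ne'⟩
  refine ⟨⟨Lpure_le L hv, fun j => ?_⟩, Set.ext hsupp⟩
  by_cases hj : j ∈ sigmaL L
  · exact (hpos j hj).le
  · exact (apply_eq_zero_of_mem_Lpure L hv hj).ge

theorem exists_basis_Lpure_pos_on_sigmaL [Fintype κ] :
    ∃ (ι : Type u) (B : Module.Basis ι ℤ (Lpure L)), ∀ i, ∀ j ∈ sigmaL L, 0 < (B i : κ → ℤ) j := by
  obtain ⟨W, hWplus, hWpos⟩ := exists_mem_Lplus_pos_on_sigmaL L
  have hW : W ∈ Lpure L := Submodule.subset_span hWplus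
  by_cases hW0 : (⟨W, hW⟩ : Lpure L) = 0
  · refine ⟨_, Module.Free.chooseBasis ℤ (Lpure L), fun i j hj => ?_⟩
    simpa [show W = 0 from congrArg Subtype.val hW0] using hWpos j hj
  obtain ⟨ι, b, i₀, hray⟩ := exists_basis_sameRay hW0
  obtain ⟨c, a, hc, ha, hca⟩ := hray.exists_pos hW0 (b.ne_zero i₀)
  have hp : ∀ j ∈ sigmaL L, 0 < (b i₀ : κ → ℤ) j := fun j hj => by
    have hcoord : c * W j = a * (b i₀ : κ → ℤ) j := by
      simpa using congr_arg (fun v : Lpure L => (v : κ → ℤ) j) hca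
    exact pos_of_mul_pos_right (hcoord ▸ mul_pos hc (hWpos j hj)) ha.le
  choose N hN using fun i => exists_add_smul_pos hp (b i : κ → ℤ)
  obtain ⟨b', hb'₀, hb'⟩ := b.exists_basis_add_smul i₀ N
  refine ⟨ι, b', fun i => ?_⟩
  rcases eq_or_ne i i₀ with rfl | hi
  · rw [hb'₀]
    exact hp
  · rw [hb' i hi]
    exact hN i

end Lattice

/-- there is a `ℤ`-basis of `L_pure` all of whose elements lie in `L⁺`
and have support equal to `σ_L`. -/
theorem stmt7 {n : ℕ} (L : Submodule ℤ (Fin n → ℤ)) :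
    ∃ (ι : Type) (B : Module.Basis ι ℤ (Lpure L)), ∀ i : ι,
      (B i : Fin n → ℤ) ∈ Lplus L ∧ {j | (B i : Fin n → ℤ) j ≠ 0} = sigmaL L := by
  obtain ⟨ι, B, hB⟩ := exists_basis_Lpure_pos_on_sigmaL L
  exact ⟨ι, B, fun i => mem_Lplus_and_support_eq_sigmaL L (B i).2 (hB i)⟩
end
end

section
/- Let L ⊆ ℤⁿ be a lattice. Every strictly descending chain F̄₁ >_I F̄₂ >_I ⋯ of equivalence classes of I_L-fibers is finite; i.e., there is no infinite sequence of I_L-fibers (F_k) with F̄_{k+1} <_I F̄_k for all k. -/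
open MvPolynomial

noncomputable section

/-!
Componentwise `u ≤ u'` implies `F_u ≤_I F_{u'}` (translate by `u' - u`), so by Dickson's lemma the
preorder `u ↦ F̄_u` on `ℕⁿ` is a well quasi-order, and a well quasi-order has no infinite strictly
descending chain.
-/

section FiberOrder

variable {ι : Type*}

theorem fiberLE_refl (F : Set (ι →₀ ℕ)) : fiberLE F F :=
  ⟨0, by simp⟩

theorem fiberLE_trans {F G H : Set (ι →₀ ℕ)} (hFG : fiberLE F G) (hGH : fiberLE G H) :
    fiberLE F H := by
  obtain ⟨t, ht⟩ := hFG
  obtain ⟨s, hs⟩ := hGH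
  refine ⟨s + t, ?_⟩
  rintro _ ⟨v, hv, rfl⟩
  simpa [add_assoc] using hs ⟨t + v, ht ⟨v, hv, rfl⟩, rfl⟩

theorem fiberLE_fiber_of_le (L : Submodule ℤ (ι → ℤ)) {u u' : ι →₀ ℕ} (h : u ≤ u') :
    fiberLE (fiber L u) (fiber L u') := by
  refine ⟨u' - u, ?_⟩
  rintro _ ⟨v, hv, rfl⟩
  have hdiff : natVec (u' - u + v) - natVec u' = natVec v - natVec u := by
    funext i
    have := h i
    simp only [natVec, Pi.sub_apply, Finsupp.add_apply, Finsupp.tsub_apply]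
    omega
  change natVec (u' - u + v) - natVec u' ∈ L
  rwa [hdiff]

instance isPreorder_fiberLE_fiber (L : Submodule ℤ (ι → ℤ)) :
    IsPreorder (ι →₀ ℕ) (fun u v => fiberLE (fiber L u) (fiber L v)) where
  refl _ := fiberLE_refl _
  trans _ _ _ := fiberLE_trans

theorem wellQuasiOrdered_fiberLE_fiber [Finite ι] (L : Submodule ℤ (ι → ℤ)) :
    WellQuasiOrdered (fun u v : ι →₀ ℕ => fiberLE (fiber L u) (fiber L v)) := fun w =>
  let ⟨m, m', hmm', hle⟩ := wellQuasiOrdered_le w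
  ⟨m, m', hmm', fiberLE_fiber_of_le L hle⟩

end FiberOrder

/-- there is no infinite strictly descending chain of equivalence classes
of `I_L`-fibers. -/
theorem stmt9 {n : ℕ} (L : Submodule ℤ (Fin n → ℤ)) :
    ¬ ∃ w : ℕ → (Fin n →₀ ℕ), ∀ m : ℕ,
      fiberLE (fiber L (w (m + 1))) (fiber L (w m)) ∧
      ¬ fiberEquiv (fiber L (w (m + 1))) (fiber L (w m)) := by
  rintro ⟨w, hw⟩
  have hwf := (wellQuasiOrdered_fiberLE_fiber L).wellFounded
  exact (wellFounded_iff_isEmpty_descending_chain.1 hwf).elim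
    ⟨w, fun m => ⟨(hw m).1, fun hback => (hw m).2 ⟨(hw m).1, hback⟩⟩⟩
end
end

section
/- Let L ⊆ ℤⁿ be a pure lattice (L = L_pure) of rank r. Then μ(I_L) = r, i.e., I_L can be generated by r binomials and by no fewer binomials. -/
open MvPolynomial

noncomputable section

/-!
Since `L` is spanned by `L⁺`, there is `w ∈ L⁺` that is positive on `σ_L`, and every vector of
`L` is supported on `σ_L`. A Smith normal form of `ℤ ∙ w ⊆ L` yields a basis of `L` containing a
vector `u` of which `w` is a positive multiple, so `u ≥ 0` and `u > 0` on `σ_L`; adding large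
multiples of `u` to the other basis vectors makes all of them nonnegative.

For a nonnegative spanning family `b₁, …, b_r` of `L` the binomials `x^{bᵢ} - 1` generate `I_L`:
if `α - β = p - q` with `p`, `q` in the monoid generated by the `bᵢ`, then
`x^α - x^β = x^β (x^p - 1) - x^α (x^q - 1)`. Conversely, the exponent differences of any binomial
generating set of `I_L` span `L`, since `x^α - x^β ∈ I_{L'}` forces `α - β ∈ L'` (map to the group
algebra of `ℤ^σ / L'`); so such a set has at least `rank L` elements.
-/

namespace LatticeIdeal

variable {σ : Type*}

lemma apply_eq_zero_of_mem_Lpure {L : Submodule ℤ (σ → ℤ)} {x : σ → ℤ} (hx : x ∈ Lpure L)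
    {i : σ} (hi : i ∉ sigmaL L) : x i = 0 := by
  induction hx using Submodule.span_induction with
  | mem w hw => by_contra h; exact hi ⟨w, hw, h⟩
  | zero => rfl
  | add a b _ _ ha hb => simp [ha, hb]
  | smul c a _ ha => simp [ha]

lemma exists_mem_Lplus_pos [Fintype σ] (L : Submodule ℤ (σ → ℤ)) :
    ∃ w ∈ Lplus L, ∀ i ∈ sigmaL L, 0 < w i := by
  have : ∀ i, ∃ w ∈ Lplus L, i ∈ sigmaL L → w i ≠ 0 := fun i => by
    by_cases hi : i ∈ sigmaL L
    · obtain ⟨w, hw, hwi⟩ := hi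
      exact ⟨w, hw, fun _ => hwi⟩
    · exact ⟨0, ⟨L.zero_mem, fun _ => le_rfl⟩, fun h => absurd h hi⟩
  choose w hw hwi using this
  refine ⟨∑ j, w j, ⟨L.sum_mem fun j _ => (hw j).1, fun i => ?_⟩, fun i hi => ?_⟩
  · simpa using Finset.sum_nonneg fun j _ => (hw j).2 i
  · calc 0 < w i i := lt_of_le_of_ne ((hw i).2 i) (hwi i hi).symm
      _ ≤ ∑ j, w j i := Finset.single_le_sum (fun j _ => (hw j).2 i) (Finset.mem_univ i)
      _ = (∑ j, w j) i := by simp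

lemma nonneg_add_sum_negPart_smul [Fintype σ] {x u : σ → ℤ} (hu : 0 ≤ u)
    (hxu : ∀ i, x i ≠ 0 → 0 < u i) : 0 ≤ x + (∑ i, (x i)⁻) • u := by
  intro i
  have hle : (x i)⁻ ≤ ∑ j, (x j)⁻ :=
    Finset.single_le_sum (fun j _ => negPart_nonneg (x j)) (Finset.mem_univ i)
  have hneg := neg_le_negPart (x i)
  have hsum := (Finset.sum_nonneg fun j _ => negPart_nonneg (x j) : 0 ≤ ∑ j, (x j)⁻)
  simp only [Pi.zero_apply, Pi.add_apply, Pi.smul_apply, smul_eq_mul]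
  by_cases hxi : x i = 0
  · simpa [hxi] using mul_nonneg hsum (hu i)
  · have := hxu i hxi
    nlinarith

lemma span_range_add_smul {R M ι : Type*} [Ring R] [AddCommGroup M] [Module R M] (b : ι → M)
    {c : ι → R} {i : ι} (hi : c i = 0) :
    Submodule.span R (Set.range fun j => b j + c j • b i) = Submodule.span R (Set.range b) := by
  refine le_antisymm (Submodule.span_le.2 ?_) (Submodule.span_le.2 ?_)
  · rintro _ ⟨j, rfl⟩
    exact add_mem (Submodule.subset_span ⟨j, rfl⟩)
      (Submodule.smul_mem _ _ (Submodule.subset_span ⟨i, rfl⟩))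
  · rintro _ ⟨j, rfl⟩
    set v := fun j => b j + c j • b i
    have hv : ∀ j, v j ∈ Submodule.span R (Set.range v) := fun j => Submodule.subset_span ⟨j, rfl⟩
    have hbj : b j = v j - c j • v i := by simp [v, hi]
    exact hbj ▸ sub_mem (hv j) (Submodule.smul_mem _ _ (hv i))

lemma exists_basis_pos_smul_eq {M : Type*} [AddCommGroup M] [Module.Free ℤ M]
    [Module.Finite ℤ M] {w : M} (hw : w ≠ 0) :
    ∃ (b : Module.Basis (Fin (Module.finrank ℤ M)) ℤ M) (i : Fin (Module.finrank ℤ M)) (a : ℤ),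
      0 < a ∧ w = a • b i := by
  obtain ⟨n, snf⟩ := (ℤ ∙ w).smithNormalForm (Module.finBasis ℤ M)
  have hn : n ≤ 1 := by
    simpa [Module.finrank_eq_card_basis snf.bN] using finrank_span_le_card (R := ℤ) {w}
  have hw' := snf.bN.sum_repr ⟨w, Submodule.mem_span_singleton_self w⟩
  interval_cases n
  · exact absurd (by simpa using congrArg Subtype.val hw'.symm) hw
  · rw [Fin.sum_univ_one] at hw'
    generalize snf.bN.repr _ 0 = c at hw'
    have hwt : w = (c * snf.a 0) • snf.bM (snf.f 0) := by
      simpa [mul_smul, snf.snf] using congrArg Subtype.val hw'.symm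
    set t := c * snf.a 0
    rcases lt_trichotomy t 0 with ht | ht | ht
    · refine ⟨snf.bM.map (LinearEquiv.neg ℤ), snf.f 0, -t, neg_pos.2 ht, ?_⟩
      simpa using hwt
    · exact absurd (by simpa [ht] using hwt) hw
    · exact ⟨snf.bM, snf.f 0, t, ht, hwt⟩

lemma exists_nonneg_spanning_family [Fintype σ] {L : Submodule ℤ (σ → ℤ)} (hpure : L = Lpure L) :
    ∃ v : Fin (Module.finrank ℤ L) → σ → ℤ,
      (∀ j, 0 ≤ v j) ∧ Submodule.span ℤ (Set.range v) = L := by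
  obtain ⟨w, hw, hwpos⟩ := exists_mem_Lplus_pos L
  have hsupp : ∀ x ∈ L, ∀ i, x i ≠ 0 → 0 < w i := fun x hx i hxi =>
    hwpos i (by_contra fun hi => hxi (apply_eq_zero_of_mem_Lpure (hpure ▸ hx) hi))
  by_cases hw0 : w = 0
  · refine ⟨0, fun _ => le_rfl, le_antisymm ?_ fun x hx => ?_⟩
    · exact Submodule.span_le.2 (Set.range_subset_iff.2 fun _ => L.zero_mem)
    · have : x = 0 := funext fun i => by_contra fun hxi => by simpa [hw0] using hsupp x hx i hxi
      exact this ▸ Submodule.zero_mem _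
  obtain ⟨b, i, a, ha, hwa⟩ :=
    exists_basis_pos_smul_eq (M := L) (w := ⟨w, hw.1⟩) (by simpa using hw0)
  set u : σ → ℤ := (b i : σ → ℤ)
  have hwu : w = a • u := congrArg Subtype.val hwa
  have hu : 0 ≤ u := fun l => nonneg_of_mul_nonneg_right (by simpa [hwu] using hw.2 l) ha
  have hupos : ∀ x ∈ L, ∀ l, x l ≠ 0 → 0 < u l := fun x hx l hxl =>
    pos_of_mul_pos_right (by simpa [hwu] using hsupp x hx l hxl) ha.le
  refine ⟨fun j => (b j : σ → ℤ) + (∑ l, ((b j : σ → ℤ) l)⁻) • u,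
    fun j => nonneg_add_sum_negPart_smul hu (hupos _ (b j).2), ?_⟩
  rw [span_range_add_smul (fun j => (b j : σ → ℤ)) (i := i)
    (Finset.sum_eq_zero fun l _ => negPart_eq_zero.2 (hu l))]
  refine le_antisymm (Submodule.span_le.2 (Set.range_subset_iff.2 fun j => (b j).2)) fun x hx => ?_
  rw [show x = ((⟨x, hx⟩ : L) : σ → ℤ) from rfl, ← b.sum_repr ⟨x, hx⟩, Submodule.coe_sum]
  exact Submodule.sum_mem _ fun j _ => Submodule.smul_mem _ _ (Submodule.subset_span ⟨j, rfl⟩)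

section Binomials

variable {k : Type*} [Field k]

lemma muIdeal_eq_card {L : Submodule ℤ (σ → ℤ)} {S : Finset (MvPolynomial σ k)}
    (hS : ∀ f ∈ S, IsLatticeBinomial k L f)
    (hspan : Ideal.span (S : Set (MvPolynomial σ k)) = latticeIdeal k L)
    (hmin : ∀ S' : Finset (MvPolynomial σ k), (∀ f ∈ S', IsLatticeBinomial k L f) →
      Ideal.span (S' : Set (MvPolynomial σ k)) = latticeIdeal k L → S.card ≤ S'.card) :
    muIdeal k L = S.card :=
  le_antisymm (Nat.sInf_le ⟨S, rfl, hS, hspan⟩)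
    (le_csInf ⟨_, S, rfl, hS, hspan⟩ fun _ ⟨S', hcard, hS', hspan'⟩ => hcard ▸ hmin S' hS' hspan')

lemma monomial_sub_one_mem_of_mem_closure {J : Ideal (MvPolynomial σ k)} {s : Set (σ →₀ ℕ)}
    (hs : ∀ a ∈ s, monomial a (1 : k) - 1 ∈ J) {a : σ →₀ ℕ} (ha : a ∈ AddSubmonoid.closure s) :
    monomial a (1 : k) - 1 ∈ J := by
  induction ha using AddSubmonoid.closure_induction with
  | mem a ha => exact hs a ha
  | zero => simp
  | add a b _ _ ha hb =>
    have : monomial (a + b) (1 : k) - 1 =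
        monomial a 1 * (monomial b 1 - 1) + (monomial a 1 - 1) := by
      rw [mul_sub, monomial_mul, one_mul, mul_one]; ring
    rw [this]
    exact add_mem (J.mul_mem_left _ hb) ha

lemma monomial_sub_monomial_mem {J : Ideal (MvPolynomial σ k)} {u v p q : σ →₀ ℕ}
    (hp : monomial p (1 : k) - 1 ∈ J) (hq : monomial q (1 : k) - 1 ∈ J) (h : u + q = v + p) :
    monomial u (1 : k) - monomial v 1 ∈ J := by
  have : monomial u (1 : k) - monomial v 1 =
      monomial v 1 * (monomial p 1 - 1) - monomial u 1 * (monomial q 1 - 1) := by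
    have huv : monomial u (1 : k) * monomial q 1 = monomial v 1 * monomial p 1 := by
      rw [monomial_mul, monomial_mul, h]
    linear_combination huv
  rw [this]
  exact sub_mem (J.mul_mem_left _ hp) (J.mul_mem_left _ hq)

def natVecHom : (σ →₀ ℕ) →+ (σ → ℤ) where
  toFun := natVec
  map_zero' := by funext i; simp [natVec]
  map_add' u v := by funext i; simp [natVec]

@[simp] lemma natVecHom_apply (u : σ →₀ ℕ) : natVecHom u = natVec u := rfl

@[simp] lemma natVec_zero : natVec (0 : σ →₀ ℕ) = 0 := map_zero natVecHom

lemma natVec_injective : Function.Injective (natVec (ι := σ)) := fun u v h => by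
  ext i; simpa [natVec] using congrFun h i

variable (k) in
def quotientHom (L : Submodule ℤ (σ → ℤ)) :
    MvPolynomial σ k →+* AddMonoidAlgebra k ((σ → ℤ) ⧸ L) :=
  AddMonoidAlgebra.mapDomainRingHom k (L.mkQ.toAddMonoidHom.comp natVecHom)

lemma quotientHom_monomial (L : Submodule ℤ (σ → ℤ)) (u : σ →₀ ℕ) :
    quotientHom k L (monomial u 1) = AddMonoidAlgebra.single (L.mkQ (natVec u)) 1 := by
  simp [quotientHom, monomial]

lemma quotientHom_monomial_sub_monomial (L : Submodule ℤ (σ → ℤ)) (u v : σ →₀ ℕ) :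
    quotientHom k L (monomial u 1 - monomial v 1) = 0 ↔ natVec u - natVec v ∈ L := by
  rw [map_sub, sub_eq_zero, quotientHom_monomial, quotientHom_monomial,
    AddMonoidAlgebra.single_left_inj one_ne_zero, Submodule.mkQ_apply, Submodule.mkQ_apply,
    Submodule.Quotient.eq]

lemma latticeIdeal_le_ker_quotientHom (L : Submodule ℤ (σ → ℤ)) :
    latticeIdeal k L ≤ RingHom.ker (quotientHom k L) := by
  rw [latticeIdeal, Ideal.span_le]
  rintro f ⟨u, v, huv, rfl⟩
  exact (quotientHom_monomial_sub_monomial L u v).2 huv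

lemma sub_mem_of_monomial_sub_monomial_mem {L : Submodule ℤ (σ → ℤ)} {u v : σ →₀ ℕ}
    (h : monomial u (1 : k) - monomial v 1 ∈ latticeIdeal k L) : natVec u - natVec v ∈ L :=
  (quotientHom_monomial_sub_monomial L u v).1 (latticeIdeal_le_ker_quotientHom L h)

variable [Finite σ]

-- Negative entries are truncated to `0`, so `toExp x` and `toExp (-x)` are the positive and
-- negative parts of `x`.
def toExp (w : σ → ℤ) : σ →₀ ℕ :=
  Finsupp.equivFunOnFinite.symm fun i => (w i).toNat

lemma natVec_toExp {w : σ → ℤ} (hw : 0 ≤ w) : natVec (toExp w) = w := by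
  funext i
  simp [natVec, toExp, Int.toNat_of_nonneg (hw i)]

lemma isLatticeBinomial_monomial_toExp_sub_one {L : Submodule ℤ (σ → ℤ)} {w : σ → ℤ}
    (hw : 0 ≤ w) (hwL : w ∈ L) : IsLatticeBinomial k L (monomial (toExp w) 1 - 1) :=
  ⟨toExp w, 0, by rwa [natVec_toExp hw, natVec_zero, sub_zero], by simp⟩

lemma natVec_toExp_sub_natVec_toExp_neg (x : σ → ℤ) :
    natVec (toExp x) - natVec (toExp (-x)) = x := by
  funext i
  simp [natVec, toExp]

lemma latticeIdeal_eq_span_monomial_sub_one {L : Submodule ℤ (σ → ℤ)} {ι : Type*} [Fintype ι]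
    {b : ι → σ → ℤ} (hb : ∀ i, 0 ≤ b i) (hspan : Submodule.span ℤ (Set.range b) = L) :
    latticeIdeal k L = Ideal.span (Set.range fun i => monomial (toExp (b i)) (1 : k) - 1) := by
  set J := Ideal.span (Set.range fun i => monomial (toExp (b i)) (1 : k) - 1)
  apply le_antisymm
  · rw [latticeIdeal, Ideal.span_le]
    rintro f ⟨u, v, huv, rfl⟩
    obtain ⟨c, hc⟩ := (Submodule.mem_span_range_iff_exists_fun ℤ).1 (hspan ▸ huv)
    have hmem : ∀ m : ι → ℕ, monomial (∑ i, m i • toExp (b i)) (1 : k) - 1 ∈ J := fun m =>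
      monomial_sub_one_mem_of_mem_closure (s := Set.range fun i => toExp (b i))
        (by rintro _ ⟨i, rfl⟩; exact Ideal.subset_span ⟨i, rfl⟩)
        (AddSubmonoid.sum_mem _ fun i _ =>
          AddSubmonoid.nsmul_mem _ (AddSubmonoid.subset_closure (Set.mem_range_self i)) _)
    have hnatVec : ∀ m : ι → ℕ, natVec (∑ i, m i • toExp (b i)) = ∑ i, (m i : ℤ) • b i :=
      fun m => by
        rw [← natVecHom_apply, map_sum]
        simp only [map_nsmul, natVecHom_apply, natVec_toExp (hb _), natCast_zsmul]
    refine monomial_sub_monomial_mem (hmem fun i => (c i).toNat) (hmem fun i => (-c i).toNat)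
      (natVec_injective ?_)
    rw [← natVecHom_apply, ← natVecHom_apply, map_add, map_add]
    simp only [natVecHom_apply, hnatVec]
    have hsplit :
        ∑ i, c i • b i = ∑ i, ((c i).toNat : ℤ) • b i - ∑ i, ((-c i).toNat : ℤ) • b i := by
      simp only [← Finset.sum_sub_distrib, ← sub_smul, Int.toNat_sub_toNat_neg]
    rw [eq_sub_iff_add_eq, add_comm] at hc
    rw [← hc, hsplit]
    abel
  · rw [Ideal.span_le]
    rintro _ ⟨i, rfl⟩
    exact Ideal.subset_span (isLatticeBinomial_monomial_toExp_sub_one (hb i)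
      (hspan ▸ Submodule.subset_span (Set.mem_range_self i)))

lemma le_of_latticeIdeal_le {L L' : Submodule ℤ (σ → ℤ)}
    (h : latticeIdeal k L ≤ latticeIdeal k L') : L ≤ L' := by
  intro x hx
  rw [← natVec_toExp_sub_natVec_toExp_neg x]
  refine sub_mem_of_monomial_sub_monomial_mem (h (Ideal.subset_span ?_))
  exact ⟨_, _, (natVec_toExp_sub_natVec_toExp_neg x).symm ▸ hx, rfl⟩

lemma finrank_le_card_of_span_eq_latticeIdeal {L : Submodule ℤ (σ → ℤ)}
    {S : Finset (MvPolynomial σ k)} (hS : ∀ f ∈ S, IsLatticeBinomial k L f)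
    (hspan : Ideal.span (S : Set (MvPolynomial σ k)) = latticeIdeal k L) :
    Module.finrank ℤ L ≤ S.card := by
  classical
  choose! u v huv hf using hS
  set d := fun f => natVec (u f) - natVec (v f)
  have hL : Submodule.span ℤ (S.image d : Set (σ → ℤ)) = L := by
    refine le_antisymm (Submodule.span_le.2 ?_) (le_of_latticeIdeal_le (k := k) ?_)
    · simpa [Set.subset_def] using huv
    · rw [← hspan, Ideal.span_le]
      intro f hfS
      rw [hf f hfS]
      exact Ideal.subset_span ⟨u f, v f,
        Submodule.subset_span (Finset.mem_coe.2 (Finset.mem_image_of_mem d hfS)), rfl⟩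
  calc Module.finrank ℤ L = (S.image d : Set (σ → ℤ)).finrank ℤ := by rw [Set.finrank, hL]
    _ ≤ (S.image d).card := finrank_span_finset_le_card _
    _ ≤ S.card := Finset.card_image_le

end Binomials

end LatticeIdeal

/-- for a pure lattice `L = L_pure` of rank `r`, `μ(I_L) = r` : `I_L` is
generated by `r` binomials and by no fewer. -/
theorem stmt13 (k : Type*) [Field k] {n r : ℕ} (L : Submodule ℤ (Fin n → ℤ))
    (hpure : L = Lpure L) (hrank : Module.finrank ℤ ↥L = r) :
    muIdeal k L = r ∧
    ∃ S : Finset (MvPolynomial (Fin n) k), S.card = r ∧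
      (∀ f ∈ S, IsLatticeBinomial k L f) ∧
      Ideal.span (S : Set (MvPolynomial (Fin n) k)) = latticeIdeal k L := by
  classical
  subst hrank
  obtain ⟨v, hv, hspan⟩ := LatticeIdeal.exists_nonneg_spanning_family hpure
  set S := Finset.univ.image fun j => monomial (LatticeIdeal.toExp (v j)) (1 : k) - 1
  have hSspan : Ideal.span (S : Set (MvPolynomial (Fin n) k)) = latticeIdeal k L := by
    rw [LatticeIdeal.latticeIdeal_eq_span_monomial_sub_one hv hspan]
    simp [S]
  have hSbin : ∀ f ∈ S, IsLatticeBinomial k L f := by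
    simp only [S, Finset.mem_image, Finset.mem_univ, true_and, forall_exists_index]
    rintro _ j rfl
    exact LatticeIdeal.isLatticeBinomial_monomial_toExp_sub_one (hv j)
      (hspan ▸ Submodule.subset_span (Set.mem_range_self j))
  have hcard : S.card = Module.finrank ℤ L :=
    le_antisymm (Finset.card_image_le.trans (by simp))
      (LatticeIdeal.finrank_le_card_of_span_eq_latticeIdeal hSbin hSspan)
  refine ⟨?_, S, hcard, hSbin, hSspan⟩
  rw [← hcard]
  exact LatticeIdeal.muIdeal_eq_card hSbin hSspan fun _ hS' hspan' =>
    hcard ▸ LatticeIdeal.finrank_le_card_of_span_eq_latticeIdeal hS' hspan'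
end
end

section
/- Let L ⊆ ℤⁿ be a lattice and L^σ ⊆ ℤ^{[n]∖σ_L} the lattice of projections u^σ = (u_i)_{i∉σ_L} of elements u ∈ L. Then L^σ contains no nonzero componentwise nonnegative vector: L^σ ∩ ℕ^{[n]∖σ_L} = {0}. -/
open MvPolynomial

noncomputable section

/-- the projected lattice `L^σ` contains no nonzero componentwise
nonnegative vector. -/
theorem stmt16 {n : ℕ} (L : Submodule ℤ (Fin n → ℤ)) :
    ∀ w ∈ Submodule.map (projCompl L) L, (∀ j, 0 ≤ w j) → w = 0 := by
  classical
  rintro w ⟨u, huL, rfl⟩ hnn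
  have key : ∀ i : Fin n, ∃ g : Fin n → ℤ,
      g ∈ L ∧ (∀ j, 0 ≤ g j) ∧ (i ∈ sigmaL L → 1 ≤ g i) ∧ (∀ j, j ∉ sigmaL L → g j = 0) := by
    intro i
    by_cases h : i ∈ sigmaL L
    · obtain ⟨g, hgL, hgi⟩ := h
      refine ⟨g, hgL.1, hgL.2, fun _ => ?_, fun j hj => ?_⟩
      · have := hgL.2 i
        omega
      · by_contra hne
        exact hj ⟨g, hgL, hne⟩
    · exact ⟨0, L.zero_mem, fun _ => le_refl _, fun hi => absurd hi h, fun _ _ => rfl⟩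
  choose g hgL hgnn hgpos hgsupp using key
  set w0 : Fin n → ℤ := ∑ i : Fin n, g i with hw0
  have hw0L : w0 ∈ L := Submodule.sum_mem L fun i _ => hgL i
  have hw0nn : ∀ j, 0 ≤ w0 j := by
    intro j
    simp only [hw0, Finset.sum_apply]
    exact Finset.sum_nonneg fun i _ => hgnn i j
  have hw0pos : ∀ j ∈ sigmaL L, 1 ≤ w0 j := by
    intro j hj
    have h1 : g j j ≤ w0 j := by
      simp only [hw0, Finset.sum_apply]
      exact Finset.single_le_sum (fun i _ => hgnn i j) (Finset.mem_univ j)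
    have h2 := hgpos j hj
    omega
  have hw0supp : ∀ j, j ∉ sigmaL L → w0 j = 0 := by
    intro j hj
    simp only [hw0, Finset.sum_apply]
    exact Finset.sum_eq_zero fun i _ => hgsupp i j hj
  set N : ℤ := ∑ i : Fin n, |u i| with hN
  have hNnn : 0 ≤ N := Finset.sum_nonneg fun i _ => abs_nonneg _
  have hNi : ∀ i, -u i ≤ N := by
    intro i
    have h1 : |u i| ≤ N := Finset.single_le_sum (fun j _ => abs_nonneg (u j)) (Finset.mem_univ i)
    have h2 := neg_abs_le (u i)
    omega
  set v : Fin n → ℤ := u + N • w0 with hv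
  have hvL : v ∈ L := L.add_mem huL (L.smul_mem N hw0L)
  have hvnn : ∀ i, 0 ≤ v i := by
    intro i
    have hvi : v i = u i + N * w0 i := rfl
    by_cases hi : i ∈ sigmaL L
    · have h1 := hw0pos i hi
      have h2 := hNi i
      nlinarith
    · have h0 : (0 : ℤ) ≤ u i := hnn ⟨i, hi⟩
      have h1 := hw0nn i
      nlinarith
  have hvsupp : ∀ i, i ∉ sigmaL L → v i = 0 := by
    intro i hi
    by_contra hne
    exact hi ⟨v, ⟨hvL, hvnn⟩, hne⟩
  funext j
  obtain ⟨i, hi⟩ := j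
  have h1 := hvsupp i hi
  have h2 := hw0supp i hi
  have h3 : u i + N * w0 i = 0 := h1
  rw [h2, mul_zero, add_zero] at h3
  exact h3
end
end

section
/- Let L ⊆ ℤⁿ be a lattice. Then rank(L) = rank(L^σ) + rank(L_pure), where ranks are taken as ℤ-modules. -/
open MvPolynomial

noncomputable section

lemma lpure_eq {n : ℕ} (L : Submodule ℤ (Fin n → ℤ)) :
    Lpure L = L ⊓ LinearMap.ker (projCompl L) := by
  classical
  have hker : ∀ u : Fin n → ℤ, u ∈ LinearMap.ker (projCompl L) ↔ ∀ i, i ∉ sigmaL L → u i = 0 := by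
    intro u
    constructor
    · intro h i hi
      exact congrFun h ⟨i, hi⟩
    · intro h
      funext j
      exact h j.1 j.2
  apply le_antisymm
  · rw [Lpure, Submodule.span_le]
    rintro v ⟨hvL, hv0⟩
    refine ⟨hvL, (hker v).2 fun i hi => ?_⟩
    by_contra h
    exact hi ⟨v, ⟨hvL, hv0⟩, h⟩
  · rintro u ⟨huL, huK⟩
    replace huK := (hker u).1 huK
    -- build positive vector w
    set wf : Fin n → (Fin n → ℤ) := fun i =>
      if h : i ∈ sigmaL L then h.choose else 0 with hwf
    have hwf_mem : ∀ i, wf i ∈ Lplus L ∨ wf i = 0 := by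
      intro i; rw [hwf]; dsimp only
      split
      · left; exact (‹i ∈ sigmaL L›).choose_spec.1
      · right; rfl
    have hwf_pos : ∀ i (h : i ∈ sigmaL L), 0 < wf i i := by
      intro i h; rw [hwf]; dsimp only; rw [dif_pos h]
      have := h.choose_spec
      exact lt_of_le_of_ne (this.1.2 i) (Ne.symm this.2)
    have hwf_nonneg : ∀ i j, 0 ≤ wf i j := by
      intro i j
      rcases hwf_mem i with h | h
      · exact h.2 j
      · simp [h]
    have hwf_L : ∀ i, wf i ∈ L := by
      intro i
      rcases hwf_mem i with h | h
      · exact h.1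
      · simp [h]
    set w : Fin n → ℤ := ∑ i, wf i with hw
    have hwL : w ∈ L := Submodule.sum_mem L fun i _ => hwf_L i
    have hw_apply : ∀ j, w j = ∑ i, wf i j := by
      intro j; rw [hw]; simp [Finset.sum_apply]
    have hw_nonneg : ∀ j, 0 ≤ w j := by
      intro j; rw [hw_apply]
      exact Finset.sum_nonneg fun i _ => hwf_nonneg i j
    have hw_pos : ∀ j, j ∈ sigmaL L → 1 ≤ w j := by
      intro j hj
      rw [hw_apply]
      calc (1:ℤ) ≤ wf j j := hwf_pos j hj
        _ ≤ ∑ i, wf i j :=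
          Finset.single_le_sum (fun i _ => hwf_nonneg i j) (Finset.mem_univ j)
    have hw_zero : ∀ j, j ∉ sigmaL L → w j = 0 := by
      intro j hj
      rw [hw_apply]
      apply Finset.sum_eq_zero
      intro i _
      rcases hwf_mem i with h | h
      · by_contra hne
        exact hj ⟨wf i, h, hne⟩
      · simp [h]
    have hwP : w ∈ Lplus L := ⟨hwL, hw_nonneg⟩
    set N : ℤ := ∑ j, |u j| with hN
    have hN_nonneg : 0 ≤ N := Finset.sum_nonneg fun j _ => abs_nonneg _
    have hN_ge : ∀ j, -u j ≤ N := by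
      intro j
      calc -u j ≤ |u j| := neg_le_abs _
        _ ≤ N := Finset.single_le_sum (f := fun j => |u j|)
            (fun i _ => abs_nonneg _) (Finset.mem_univ j)
    have hv : u + N • w ∈ Lplus L := by
      refine ⟨Submodule.add_mem L huL (Submodule.smul_mem L N hwL), fun j => ?_⟩
      by_cases hj : j ∈ sigmaL L
      · have h1 : N ≤ N * w j := le_mul_of_one_le_right hN_nonneg (hw_pos j hj)
        have : -u j ≤ N * w j := le_trans (hN_ge j) h1
        have := neg_le_iff_add_nonneg.mp this
        simp only [Pi.add_apply, Pi.smul_apply, smul_eq_mul]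
        linarith
      · simp [huK j hj, hw_zero j hj]
    have h1 : (u + N • w) ∈ Lpure L := Submodule.subset_span hv
    have h2 : w ∈ Lpure L := Submodule.subset_span hwP
    have : u = (u + N • w) - N • w := by ring
    rw [this]
    exact Submodule.sub_mem _ h1 (Submodule.smul_mem _ N h2)

/-- `rank L = rank L^σ + rank L_pure`. -/
theorem stmt17 {n : ℕ} (L : Submodule ℤ (Fin n → ℤ)) :
    Module.finrank ℤ ↥L =
      Module.finrank ℤ ↥(Submodule.map (projCompl L) L) +
      Module.finrank ℤ ↥(Lpure L) := by
  classical
  set g := (projCompl L).domRestrict L with hg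
  have h1 : Module.finrank ℤ (L ⧸ LinearMap.ker g) + Module.finrank ℤ (LinearMap.ker g)
      = Module.finrank ℤ L := Submodule.finrank_quotient_add_finrank _
  have h2 : Module.finrank ℤ (L ⧸ LinearMap.ker g)
      = Module.finrank ℤ (Submodule.map (projCompl L) L) := by
    have hr : LinearMap.range g = Submodule.map (projCompl L) L := by
      rw [hg, LinearMap.range_domRestrict]
    rw [LinearEquiv.finrank_eq g.quotKerEquivRange, hr]
  have hle : Lpure L ≤ L := by rw [lpure_eq]; exact inf_le_left
  have h3 : LinearMap.ker g = Submodule.comap L.subtype (Lpure L) := by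
    ext x
    simp only [hg, LinearMap.mem_ker, LinearMap.domRestrict_apply, Submodule.mem_comap,
      Submodule.subtype_apply, lpure_eq, Submodule.mem_inf]
    exact ⟨fun h => ⟨x.2, h⟩, fun h => h.2⟩
  have h4 : Module.finrank ℤ (LinearMap.ker g) = Module.finrank ℤ (Lpure L) := by
    rw [h3]
    exact LinearEquiv.finrank_eq (Submodule.comapSubtypeEquivOfLe hle)
  rw [← h1, h2, h4]
end
end
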